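/- Fix weights ω_1, ω_2 ≥ 0, define λ(x) = ω_1·(f_{1,1}(x) − f_{0,1}(x)) − ω_2·(f_{1,0}(x) − f_{0,0}(x)) and T^f = {x ∈ Ω : λ(x) ≤ 0}. Then: (i) for every classifier T, ∫_{T^f} λ dν ≤ ∫_T λ dν; and (ii) if in addition TPR_1(T) ≥ TPR_0(T), TNR_1(T) ≥ TNR_0(T), TPR_1(T^f) ≥ TPR_0(T^f), and TNR_1(T^f) ≥ TNR_0(T^f), then the weighted unfairness satisfies F_U^ω(T^f) ≤ F_U^ω(T); i.e., T^f is the optimal classifier for fairness in this regime. -/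

import Mathlib

open MeasureTheory

/-- True positive rate of group `a` under classifier `T`: `TPR_a(T) = ∫_T f_{a,1} dν`. -/
noncomputable def tprOf {Ω : Type*} [MeasurableSpace Ω] (ν : Measure Ω)
    (f : Bool → Bool → Ω → ℝ) (a : Bool) (T : Set Ω) : ℝ :=
  ∫ x in T, f a true x ∂ν

/-- True negative rate of group `a` under classifier `T`: `TNR_a(T) = ∫_{Tᶜ} f_{a,0} dν`. -/
noncomputable def tnrOf {Ω : Type*} [MeasurableSpace Ω] (ν : Measure Ω)
    (f : Bool → Bool → Ω → ℝ) (a : Bool) (T : Set Ω) : ℝ :=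
  ∫ x in Tᶜ, f a false x ∂ν

/-- Weighted equalized-odds unfairness:
`F_U^ω(T) = ω₁|TPR₁(T) − TPR₀(T)| + ω₂|TNR₁(T) − TNR₀(T)|`. -/
noncomputable def wUnfairness {Ω : Type*} [MeasurableSpace Ω] (ν : Measure Ω)
    (f : Bool → Bool → Ω → ℝ) (ω₁ ω₂ : ℝ) (T : Set Ω) : ℝ :=
  ω₁ * |tprOf ν f true T - tprOf ν f false T|
    + ω₂ * |tnrOf ν f true T - tnrOf ν f false T|

/-!
On a classifier `T` whose group rates are ordered as in (ii) the absolute values in `F_U^ω(T)`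
drop, and since each `f_{a,0}` has total mass one, the TNR gap on `T` is minus the gap of the
`f a 0`-masses of `T`; hence `F_U^ω(T) = ∫_T λ dν`. So (ii) is (i) applied to such classifiers,
and (i) holds because `T^f` collects exactly the points where `λ` is nonpositive.
-/

/-- The score `λ` whose sublevel set `{λ ≤ 0}` is the fair classifier `T^f`. -/
noncomputable def fairnessScore {Ω : Type*} (f : Bool → Bool → Ω → ℝ) (ω₁ ω₂ : ℝ) (x : Ω) : ℝ :=
  ω₁ * (f true true x - f false true x) - ω₂ * (f true false x - f false false x)

section

variable {Ω : Type*} [MeasurableSpace Ω] {ν : Measure Ω} {f : Bool → Bool → Ω → ℝ}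

lemma measurable_fairnessScore (hf : ∀ a y, Measurable (f a y)) (ω₁ ω₂ : ℝ) :
    Measurable (fairnessScore f ω₁ ω₂) :=
  (measurable_const.mul ((hf true true).sub (hf false true))).sub
    (measurable_const.mul ((hf true false).sub (hf false false)))

lemma integrable_fairnessScore (hf : ∀ a y, Integrable (f a y) ν) (ω₁ ω₂ : ℝ) :
    Integrable (fairnessScore f ω₁ ω₂) ν :=
  (((hf true true).sub (hf false true)).const_mul ω₁).sub
    (((hf true false).sub (hf false false)).const_mul ω₂)

lemma tnrOf_eq_one_sub {a : Bool} (hf_int : Integrable (f a false) ν) (hf_one : ∫ x, f a false x ∂ν = 1)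
    {T : Set Ω} (hT : MeasurableSet T) :
    tnrOf ν f a T = 1 - ∫ x in T, f a false x ∂ν := by
  rw [tnrOf, ← hf_one, ← integral_add_compl hT hf_int, add_sub_cancel_left]

lemma setIntegral_fairnessScore (hf_int : ∀ a y, Integrable (f a y) ν)
    (hf_one : ∀ a y, ∫ x, f a y x ∂ν = 1) (ω₁ ω₂ : ℝ) {T : Set Ω} (hT : MeasurableSet T) :
    ∫ x in T, fairnessScore f ω₁ ω₂ x ∂ν =
      ω₁ * (tprOf ν f true T - tprOf ν f false T)
        + ω₂ * (tnrOf ν f true T - tnrOf ν f false T) := by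
  have hi : ∀ a y, Integrable (f a y) (ν.restrict T) := fun a y => (hf_int a y).integrableOn
  rw [tnrOf_eq_one_sub (hf_int true false) (hf_one true false) hT,
    tnrOf_eq_one_sub (hf_int false false) (hf_one false false) hT, tprOf, tprOf]
  simp only [fairnessScore]
  have hi₁ : Integrable (fun x => ω₁ * (f true true x - f false true x)) (ν.restrict T) :=
    ((hi true true).sub (hi false true)).const_mul ω₁
  have hi₂ : Integrable (fun x => ω₂ * (f true false x - f false false x)) (ν.restrict T) :=
    ((hi true false).sub (hi false false)).const_mul ω₂
  rw [integral_sub hi₁ hi₂, integral_const_mul, integral_const_mul, integral_sub (hi true true) (hi false true),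
    integral_sub (hi true false) (hi false false)]
  ring

lemma wUnfairness_eq_of_le {ω₁ ω₂ : ℝ} {T : Set Ω}
    (htpr : tprOf ν f false T ≤ tprOf ν f true T) (htnr : tnrOf ν f false T ≤ tnrOf ν f true T) :
    wUnfairness ν f ω₁ ω₂ T =
      ω₁ * (tprOf ν f true T - tprOf ν f false T)
        + ω₂ * (tnrOf ν f true T - tnrOf ν f false T) := by
  rw [wUnfairness, abs_of_nonneg (sub_nonneg.2 htpr), abs_of_nonneg (sub_nonneg.2 htnr)]

end

theorem fairness_bayes_classifier
    {Ω : Type*} [MeasurableSpace Ω] (ν : Measure Ω)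
    (f : Bool → Bool → Ω → ℝ)
    (hf_meas : ∀ a y, Measurable (f a y))
    (hf_int : ∀ a y, Integrable (f a y) ν)
    (hf_one : ∀ a y, ∫ x, f a y x ∂ν = 1)
    (ω₁ ω₂ : ℝ)
    (lam : Ω → ℝ)
    (hlam : ∀ x, lam x = ω₁ * (f true true x - f false true x)
      - ω₂ * (f true false x - f false false x))
    (Tf : Set Ω) (hTf : Tf = {x | lam x ≤ 0}) :
    (∀ T : Set Ω, MeasurableSet T → ∫ x in Tf, lam x ∂ν ≤ ∫ x in T, lam x ∂ν) ∧
    (∀ T : Set Ω, MeasurableSet T →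
      tprOf ν f false T ≤ tprOf ν f true T →
      tnrOf ν f false T ≤ tnrOf ν f true T →
      tprOf ν f false Tf ≤ tprOf ν f true Tf →
      tnrOf ν f false Tf ≤ tnrOf ν f true Tf →
      wUnfairness ν f ω₁ ω₂ Tf ≤ wUnfairness ν f ω₁ ω₂ T) := by
  obtain rfl : lam = fairnessScore f ω₁ ω₂ := funext hlam
  have hmeas := measurable_fairnessScore hf_meas ω₁ ω₂
  have hTf_meas : MeasurableSet Tf := hTf ▸ measurableSet_le hmeas measurable_const
  have optimal : ∀ T : Set Ω, MeasurableSet T →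
      ∫ x in Tf, fairnessScore f ω₁ ω₂ x ∂ν ≤ ∫ x in T, fairnessScore f ω₁ ω₂ x ∂ν :=
    fun T hT => hTf ▸ setIntegral_nonpos_le hT hmeas.stronglyMeasurable
      (integrable_fairnessScore hf_int ω₁ ω₂)
  refine ⟨optimal, fun T hT hT_tpr hT_tnr hTf_tpr hTf_tnr => ?_⟩
  rw [wUnfairness_eq_of_le hTf_tpr hTf_tnr, wUnfairness_eq_of_le hT_tpr hT_tnr,
    ← setIntegral_fairnessScore hf_int hf_one ω₁ ω₂ hTf_meas,
    ← setIntegral_fairnessScore hf_int hf_one ω₁ ω₂ hT]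
  exact optimal T hT
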